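/- The second moment of the area of a random triangle in a unit-area triangle equals 1/72, and in the unit square equals 1/96. -/

import Mathlib

/-!
Put `v x = (1, x₀, x₁)`; twice the area of the triangle `abc` is `|det (v a, v b, v c)|`.
Expanding this determinant by the Leibniz formula separates the three points, so for any measure
`∫∫∫ det (v a, v b, v c)² = 3! · det M`, where `M = ∫ v vᵀ` is the matrix of moments of order at
most two (a continuous Cauchy–Binet identity), and the triple integral of the squared area is
`(3/2) · det M`. For the unit square `det M = 1/144`, whence `1/96`.
An affine map with linear part `L` multiplies areas by `|det L|`, hence the triple integral over
the image of a set by `|det L|⁵`. A triangle of area `1` is the image of the triangle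
`(0,0), (1,0), (1,1)`, for which `det M = 1/3456`, under such a map with `|det L| = 2`; this gives
`2⁵ · (3/2) / 3456 = 1/72`.
-/

open MeasureTheory Set Matrix Equiv

local notation "ℝ²" => EuclideanSpace ℝ (Fin 2)

noncomputable section

lemma sum_sign_mul_sign_mul_prod {n R : Type*} [Fintype n] [DecidableEq n] [CommRing R]
    (M : Matrix n n R) :
    ∑ σ : Perm n, ∑ τ : Perm n, (Perm.sign σ * Perm.sign τ : ℤ) * ∏ i, M (σ i) (τ i)
      = (Fintype.card n).factorial * M.det := by
  calc _ = ∑ σ : Perm n, (Perm.sign σ : ℤ) * (M.submatrix σ id).det := by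
        refine Finset.sum_congr rfl fun σ _ => ?_
        rw [← det_transpose, det_apply', Finset.mul_sum]
        refine Finset.sum_congr rfl fun τ _ => ?_
        simp [mul_assoc]
    _ = ∑ σ : Perm n, M.det := by
        refine Finset.sum_congr rfl fun σ _ => ?_
        rw [det_permute, ← mul_assoc, ← Int.cast_mul, ← Units.val_mul, Int.units_mul_self]
        simp
    _ = _ := by simp [Fintype.card_perm]

section Moments

variable {X : Type*} [MeasurableSpace X] (μ : Measure X)

def momentMatrix {n : Type*} (v : X → n → ℝ) : Matrix n n ℝ :=
  Matrix.of fun i j => ∫ x, v x i * v x j ∂μ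

lemma integral_integral_integral_sum_mul {ι : Type*} (s : Finset ι) (f g h : ι → X → ℝ)
    (hf : ∀ p ∈ s, Integrable (f p) μ) (hg : ∀ p ∈ s, Integrable (g p) μ)
    (hh : ∀ p ∈ s, Integrable (h p) μ) :
    ∫ a, ∫ b, ∫ c, ∑ p ∈ s, f p a * g p b * h p c ∂μ ∂μ ∂μ
      = ∑ p ∈ s, (∫ a, f p a ∂μ) * (∫ b, g p b ∂μ) * ∫ c, h p c ∂μ := by
  have inner : ∀ a b, ∫ c, ∑ p ∈ s, f p a * g p b * h p c ∂μ
      = ∑ p ∈ s, f p a * g p b * ∫ c, h p c ∂μ := fun a b => by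
    rw [integral_finsetSum s fun p hp => (hh p hp).const_mul _]
    simp_rw [integral_const_mul]
  have middle : ∀ a, ∫ b, ∑ p ∈ s, f p a * g p b * ∫ c, h p c ∂μ ∂μ
      = ∑ p ∈ s, f p a * (∫ b, g p b ∂μ) * ∫ c, h p c ∂μ := fun a => by
    rw [integral_finsetSum s fun p hp => ((hg p hp).const_mul _).mul_const _]
    simp_rw [integral_mul_const, integral_const_mul]
  simp_rw [inner, middle]
  rw [integral_finsetSum s fun p hp => ((hf p hp).mul_const _).mul_const _]
  simp_rw [integral_mul_const]

theorem integral_integral_integral_det_sq (v : X → Fin 3 → ℝ)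
    (hv : ∀ i j, Integrable (fun x => v x i * v x j) μ) :
    ∫ a, ∫ b, ∫ c, (Matrix.of ![v a, v b, v c]).det ^ 2 ∂μ ∂μ ∂μ
      = 6 * (momentMatrix μ v).det := by
  have expand : ∀ a b c, (Matrix.of ![v a, v b, v c]).det ^ 2
      = ∑ p : Perm (Fin 3) × Perm (Fin 3),
          ((Perm.sign p.1 * Perm.sign p.2 : ℤ) * (v a (p.1 0) * v a (p.2 0)))
            * (v b (p.1 1) * v b (p.2 1)) * (v c (p.1 2) * v c (p.2 2)) := fun a b c => by
    rw [← det_transpose, det_apply', sq, Finset.sum_mul_sum, ← Finset.univ_product_univ,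
      Finset.sum_product]
    refine Finset.sum_congr rfl fun σ _ => Finset.sum_congr rfl fun τ _ => ?_
    simp only [transpose_apply, of_apply, Fin.prod_univ_three, cons_val_zero, cons_val_one,
      cons_val, Int.cast_mul]
    ring
  simp_rw [expand]
  rw [integral_integral_integral_sum_mul μ _ _ _ _ (fun p _ => (hv _ _).const_mul _)
    (fun p _ => hv _ _) (fun p _ => hv _ _)]
  have h6 : (6 : ℝ) = (Fintype.card (Fin 3)).factorial := by norm_num [Nat.factorial]
  rw [h6, ← sum_sign_mul_sign_mul_prod, ← Finset.univ_product_univ, Finset.sum_product]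
  refine Finset.sum_congr rfl fun σ _ => Finset.sum_congr rfl fun τ _ => ?_
  simp only [Int.cast_mul, integral_const_mul, momentMatrix, of_apply, Fin.prod_univ_three]
  ring

end Moments

def stdTriangle : Set ℝ² := {x | 0 ≤ x 1 ∧ x 1 ≤ x 0 ∧ x 0 ≤ 1}

lemma convex_stdTriangle : Convex ℝ stdTriangle := by
  intro x ⟨hx1, hx2, hx3⟩ y ⟨hy1, hy2, hy3⟩ a b ha hb hab
  simp only [stdTriangle, mem_ofPred_eq, PiLp.add_apply, PiLp.smul_apply, smul_eq_mul]
  refine ⟨by positivity, by nlinarith, by nlinarith⟩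

lemma convexHull_eq_stdTriangle :
    convexHull ℝ {!₂[0, 0], !₂[1, 0], !₂[1, 1]} = stdTriangle := by
  refine (convexHull_min ?_ convex_stdTriangle).antisymm fun x ⟨hx1, hx2, hx3⟩ => ?_
  · rintro _ (rfl | rfl | rfl) <;> simp [stdTriangle]
  · refine mem_convexHull_of_exists_fintype ![1 - x 0, x 0 - x 1, x 1]
      ![!₂[0, 0], !₂[1, 0], !₂[1, 1]] (fun i => ?_) ?_ (fun i => ?_) ?_
    · fin_cases i <;> simp only [Fin.isValue, Fin.zero_eta, Fin.mk_one, Fin.reduceFinMk,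
        cons_val_zero, cons_val_one, cons_val, sub_nonneg] <;> linarith
    · simp [Fin.sum_univ_three]
    · fin_cases i <;> simp
    · ext i
      fin_cases i <;> simp [Fin.sum_univ_three]

lemma isCompact_stdTriangle : IsCompact stdTriangle :=
  convexHull_eq_stdTriangle ▸ (toFinite _).isCompact_convexHull ℝ

def homCoords (x : ℝ²) : Fin 3 → ℝ := ![1, x 0, x 1]

lemma continuous_homCoords : Continuous homCoords :=
  continuous_pi fun i => by
    fin_cases i <;> simp only [homCoords, Fin.isValue, Fin.zero_eta, Fin.mk_one, Fin.reduceFinMk,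
      cons_val_zero, cons_val_one, cons_val] <;> fun_prop

def triangleDet (a b c : ℝ²) : ℝ := (Matrix.of ![homCoords a, homCoords b, homCoords c]).det

lemma triangleDet_eq (a b c : ℝ²) :
    triangleDet a b c = (b 0 - a 0) * (c 1 - a 1) - (c 0 - a 0) * (b 1 - a 1) := by
  simp only [triangleDet, homCoords, det_fin_three, of_apply, cons_val', cons_val_zero,
    cons_val_fin_one, cons_val_one, cons_val]
  ring

def edgeMap (P Q : ℝ²) : ℝ² →L[ℝ] ℝ² :=
  (EuclideanSpace.proj 0).smulRight P + (EuclideanSpace.proj 1).smulRight Q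

lemma edgeMap_apply (P Q x : ℝ²) : edgeMap P Q x = x 0 • P + x 1 • Q := rfl

lemma det_edgeMap (P Q : ℝ²) :
    LinearMap.det (edgeMap P Q : ℝ² →ₗ[ℝ] ℝ²) = P 0 * Q 1 - Q 0 * P 1 := by
  rw [← LinearMap.det_toMatrix (EuclideanSpace.basisFun (Fin 2) ℝ).toBasis, det_fin_two]
  simp [LinearMap.toMatrix_apply, edgeMap_apply]

def triangleMap (A B C : ℝ²) : ℝ² →ᵃ[ℝ] ℝ² where
  toFun x := A + edgeMap (B - A) (C - B) x
  linear := edgeMap (B - A) (C - B)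
  map_vadd' x v := by
    simp only [vadd_eq_add, ContinuousLinearMap.coe_coe, map_add]
    abel

lemma triangleMap_apply (A B C x : ℝ²) :
    triangleMap A B C x = A + edgeMap (B - A) (C - B) x := rfl

lemma det_edgeMap_sub (A B C : ℝ²) :
    LinearMap.det (edgeMap (B - A) (C - B) : ℝ² →ₗ[ℝ] ℝ²) = triangleDet A B C := by
  rw [det_edgeMap, triangleDet_eq]
  simp only [PiLp.sub_apply]
  ring

lemma triangleMap_image_stdTriangle (A B C : ℝ²) :
    triangleMap A B C '' stdTriangle = convexHull ℝ {A, B, C} := by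
  rw [← convexHull_eq_stdTriangle, AffineMap.image_convexHull]
  simp [image_insert_eq, triangleMap_apply, edgeMap_apply]

lemma triangleDet_triangleMap (A B C a b c : ℝ²) :
    triangleDet (triangleMap A B C a) (triangleMap A B C b) (triangleMap A B C c)
      = triangleDet A B C * triangleDet a b c := by
  simp only [triangleDet_eq, triangleMap_apply, edgeMap_apply, PiLp.add_apply, PiLp.sub_apply,
    PiLp.smul_apply, smul_eq_mul]
  ring

lemma volume_image_triangleMap (A B C : ℝ²) (s : Set ℝ²) :
    volume (triangleMap A B C '' s) = ENNReal.ofReal |triangleDet A B C| * volume s := by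
  have himage : triangleMap A B C '' s = (A + ·) '' (edgeMap (B - A) (C - B) '' s) := by
    rw [image_image]; rfl
  rw [himage, image_add_left, measure_preimage_add, Measure.addHaar_image_continuousLinearMap,
    det_edgeMap_sub]

lemma setIntegral_image_triangleMap {A B C : ℝ²} (hD : triangleDet A B C ≠ 0) {s : Set ℝ²}
    (hs : MeasurableSet s) (f : ℝ² → ℝ) :
    ∫ x in triangleMap A B C '' s, f x
      = |triangleDet A B C| * ∫ x in s, f (triangleMap A B C x) := by
  have hinj : InjOn (triangleMap A B C) s := fun x _ y _ hxy =>
    (LinearMap.equivOfDetNeZero _ (det_edgeMap_sub A B C ▸ hD)).injective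
      (add_left_cancel hxy)
  rw [integral_image_eq_integral_abs_det_fderiv_smul volume hs (f := triangleMap A B C)
    (fun x _ => ((edgeMap (B - A) (C - B)).hasFDerivAt.const_add A).hasFDerivWithinAt) hinj,
    ContinuousLinearMap.det, det_edgeMap_sub, ← integral_const_mul]
  rfl

def coordEquiv : ℝ² ≃ᵐ ℝ × ℝ :=
  (MeasurableEquiv.toLp 2 (Fin 2 → ℝ)).symm.trans MeasurableEquiv.finTwoArrow

lemma measurePreserving_coordEquiv : MeasurePreserving coordEquiv :=
  (volume_preserving_finTwoArrow ℝ).comp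
    (EuclideanSpace.volume_preserving_symm_measurableEquiv_toLp (Fin 2))

lemma setIntegral_preimage_coordEquiv (s : Set (ℝ × ℝ)) (f : ℝ² → ℝ) :
    ∫ x in coordEquiv ⁻¹' s, f x = ∫ p in s, f !₂[p.1, p.2] := by
  rw [← measurePreserving_coordEquiv.setIntegral_preimage_emb
    coordEquiv.measurableEmbedding]
  congr 1 with x
  congr 1
  ext i
  fin_cases i <;> rfl

lemma setIntegral_lowerTriangle {g : ℝ × ℝ → ℝ} (hg : Continuous g) :
    ∫ p in {p : ℝ × ℝ | 0 ≤ p.2 ∧ p.2 ≤ p.1 ∧ p.1 ≤ 1}, g p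
      = ∫ u in (0:ℝ)..1, ∫ v in (0:ℝ)..u, g (u, v) := by
  have hT : {p : ℝ × ℝ | 0 ≤ p.2 ∧ p.2 ≤ p.1 ∧ p.1 ≤ 1}
      = Icc 0 1 ×ˢ Icc 0 1 ∩ {p | p.2 ≤ p.1} := by
    ext ⟨u, v⟩
    simp only [mem_ofPred_eq, mem_inter_iff, mem_prod, mem_Icc]
    constructor
    · rintro ⟨h0, h1, h2⟩; exact ⟨⟨⟨by linarith, h2⟩, h0, by linarith⟩, h1⟩
    · rintro ⟨⟨⟨-, h2⟩, h0, -⟩, h1⟩; exact ⟨h0, h1, h2⟩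
  have hS : MeasurableSet {p : ℝ × ℝ | p.2 ≤ p.1} :=
    measurableSet_le measurable_snd measurable_fst
  have hslice : ∀ u ∈ Icc (0:ℝ) 1,
      ∫ v in Icc (0:ℝ) 1, {p : ℝ × ℝ | p.2 ≤ p.1}.indicator g (u, v)
        = ∫ v in (0:ℝ)..u, g (u, v) := by
    intro u hu
    change ∫ v in Icc (0:ℝ) 1, (Iic u).indicator (fun v => g (u, v)) v = _
    rw [integral_Icc_eq_integral_Ioc, setIntegral_indicator measurableSet_Iic, Ioc_inter_Iic,
      inf_eq_right.2 hu.2, intervalIntegral.integral_of_le hu.1]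
  rw [hT, ← setIntegral_indicator hS, Measure.volume_eq_prod, setIntegral_prod]
  · rw [setIntegral_congr_fun measurableSet_Icc hslice,
      intervalIntegral.integral_of_le zero_le_one, integral_Icc_eq_integral_Ioc]
  · exact (hg.continuousOn.integrableOn_compact (isCompact_Icc.prod isCompact_Icc)).indicator hS

lemma setIntegral_Icc_prod_Icc {g : ℝ × ℝ → ℝ} (hg : Continuous g) :
    ∫ p in Icc (0:ℝ) 1 ×ˢ Icc (0:ℝ) 1, g p = ∫ u in (0:ℝ)..1, ∫ v in (0:ℝ)..1, g (u, v) := by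
  rw [Measure.volume_eq_prod, setIntegral_prod _
    (hg.continuousOn.integrableOn_compact (isCompact_Icc.prod isCompact_Icc))]
  simp only [intervalIntegral.integral_of_le zero_le_one, integral_Icc_eq_integral_Ioc]

lemma stdTriangle_eq_preimage :
    stdTriangle = coordEquiv ⁻¹' {p : ℝ × ℝ | 0 ≤ p.2 ∧ p.2 ≤ p.1 ∧ p.1 ≤ 1} := rfl

def unitSquare : Set ℝ² := {x | ∀ i, x i ∈ Icc 0 1}

lemma unitSquare_eq_preimage : unitSquare = coordEquiv ⁻¹' (Icc 0 1 ×ˢ Icc 0 1) := by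
  ext x
  simp [unitSquare, Fin.forall_fin_two, coordEquiv, and_and_and_comm]

lemma isCompact_unitSquare : IsCompact unitSquare := by
  convert (isCompact_univ_pi fun _ : Fin 2 => isCompact_Icc (a := (0:ℝ)) (b := 1)).image
    (PiLp.continuous_toLp 2 fun _ : Fin 2 => ℝ) using 1
  ext x
  simp only [unitSquare, mem_ofPred_eq, mem_image, mem_univ_pi]
  exact ⟨fun h => ⟨x.ofLp, h, rfl⟩, by rintro ⟨y, hy, rfl⟩; exact hy⟩

lemma setIntegral_stdTriangle_monomial (i j : ℕ) :
    ∫ x in stdTriangle, x 0 ^ i * x 1 ^ j = 1 / ((j + 1) * (i + j + 2)) := by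
  rw [stdTriangle_eq_preimage, setIntegral_preimage_coordEquiv,
    setIntegral_lowerTriangle (by fun_prop)]
  simp only [cons_val_zero, cons_val_one, intervalIntegral.integral_const_mul,
    integral_pow]
  have hpow : ∀ u : ℝ, u ^ i * ((u ^ (j + 1) - 0 ^ (j + 1)) / (j + 1))
      = (j + 1 : ℝ)⁻¹ * u ^ (i + j + 1) := fun u => by
    rw [zero_pow (Nat.succ_ne_zero j), sub_zero]; ring
  simp only [hpow, intervalIntegral.integral_const_mul, integral_pow]
  field_simp
  push_cast
  ring

lemma setIntegral_unitSquare_monomial (i j : ℕ) :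
    ∫ x in unitSquare, x 0 ^ i * x 1 ^ j = 1 / ((i + 1) * (j + 1)) := by
  rw [unitSquare_eq_preimage, setIntegral_preimage_coordEquiv,
    setIntegral_Icc_prod_Icc (by fun_prop)]
  simp only [cons_val_zero, cons_val_one, intervalIntegral.integral_const_mul,
    intervalIntegral.integral_mul_const, integral_pow]
  simp [mul_comm]

lemma homCoords_eq_monomial (x : ℝ²) (i : Fin 3) :
    homCoords x i = x 0 ^ ![0, 1, 0] i * x 1 ^ ![0, 0, 1] i := by
  fin_cases i <;> simp [homCoords]

lemma momentMatrix_homCoords_apply (μ : Measure ℝ²) (i j : Fin 3) :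
    momentMatrix μ homCoords i j
      = ∫ x, x 0 ^ (![0, 1, 0] i + ![0, 1, 0] j) * x 1 ^ (![0, 0, 1] i + ![0, 0, 1] j) ∂μ := by
  simp only [momentMatrix, of_apply, homCoords_eq_monomial, pow_add]
  congr 1 with x
  ring

lemma momentMatrix_stdTriangle :
    momentMatrix (volume.restrict stdTriangle) homCoords
      = !![1/2, 1/3, 1/6; 1/3, 1/4, 1/8; 1/6, 1/8, 1/12] := by
  ext i j
  rw [momentMatrix_homCoords_apply, setIntegral_stdTriangle_monomial]
  fin_cases i <;> fin_cases j <;> norm_num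

lemma momentMatrix_unitSquare :
    momentMatrix (volume.restrict unitSquare) homCoords
      = !![1, 1/2, 1/2; 1/2, 1/3, 1/4; 1/2, 1/4, 1/3] := by
  ext i j
  rw [momentMatrix_homCoords_apply, setIntegral_unitSquare_monomial]
  fin_cases i <;> fin_cases j <;> norm_num

lemma volume_stdTriangle : volume stdTriangle = ENNReal.ofReal (1 / 2) := by
  have h := setIntegral_stdTriangle_monomial 0 0
  simp only [pow_zero, mul_one, setIntegral_const, smul_eq_mul] at h
  rw [← ofReal_measureReal isCompact_stdTriangle.measure_lt_top.ne, h]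
  norm_num

lemma volume_convexHull_triple (a b c : ℝ²) :
    volume (convexHull ℝ {a, b, c}) = ENNReal.ofReal (|triangleDet a b c| / 2) := by
  rw [← triangleMap_image_stdTriangle, volume_image_triangleMap, volume_stdTriangle,
    ← ENNReal.ofReal_mul (abs_nonneg _)]
  ring_nf

lemma toReal_volume_convexHull_sq (a b c : ℝ²) :
    (volume (convexHull ℝ {a, b, c})).toReal ^ 2 = triangleDet a b c ^ 2 / 4 := by
  rw [volume_convexHull_triple, ENNReal.toReal_ofReal (by positivity), div_pow, sq_abs]
  norm_num

lemma integral_area_sq_eq_det_momentMatrix {K : Set ℝ²} (hK : IsCompact K) :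
    ∫ a in K, ∫ b in K, ∫ c in K, (volume (convexHull ℝ {a, b, c})).toReal ^ 2
      = 3 / 2 * (momentMatrix (volume.restrict K) homCoords).det := by
  have hc (i : Fin 3) : Continuous fun x => homCoords x i :=
    (continuous_apply i).comp continuous_homCoords
  simp_rw [toReal_volume_convexHull_sq, integral_div, triangleDet]
  rw [integral_integral_integral_det_sq _ homCoords fun i j =>
    ((hc i).mul (hc j)).continuousOn.integrableOn_compact hK]
  ring

lemma integral_area_sq_image_triangleMap {A B C : ℝ²} (hD : triangleDet A B C ≠ 0)
    {s : Set ℝ²} (hs : MeasurableSet s) :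
    ∫ a in triangleMap A B C '' s, ∫ b in triangleMap A B C '' s, ∫ c in triangleMap A B C '' s,
        (volume (convexHull ℝ {a, b, c})).toReal ^ 2
      = |triangleDet A B C| ^ 5 * ∫ a in s, ∫ b in s, ∫ c in s,
        (volume (convexHull ℝ {a, b, c})).toReal ^ 2 := by
  simp_rw [toReal_volume_convexHull_sq, setIntegral_image_triangleMap hD hs,
    triangleDet_triangleMap, mul_pow, mul_div_assoc, integral_const_mul,
    ← sq_abs (triangleDet A B C)]
  ring

/-- The second moment of the area of a random triangle in a unit-area triangle equals
`1/72`, and in the unit square equals `1/96`. -/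
theorem stmt_6 :
    (∀ A B C : EuclideanSpace ℝ (Fin 2), volume (convexHull ℝ {A, B, C}) = 1 →
      (∫ x₀ in convexHull ℝ {A, B, C}, ∫ x₁ in convexHull ℝ {A, B, C},
          ∫ x₂ in convexHull ℝ {A, B, C},
            (volume (convexHull ℝ {x₀, x₁, x₂})).toReal ^ 2)
        = 1 / 72) ∧
    (∫ x₀ in {x : EuclideanSpace ℝ (Fin 2) | ∀ i, x i ∈ Set.Icc (0:ℝ) 1},
        ∫ x₁ in {x : EuclideanSpace ℝ (Fin 2) | ∀ i, x i ∈ Set.Icc (0:ℝ) 1},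
          ∫ x₂ in {x : EuclideanSpace ℝ (Fin 2) | ∀ i, x i ∈ Set.Icc (0:ℝ) 1},
            (volume (convexHull ℝ {x₀, x₁, x₂})).toReal ^ 2)
      = 1 / 96 := by
  constructor
  · intro A B C hV
    have hD : |triangleDet A B C| = 2 := by
      rw [volume_convexHull_triple, ENNReal.ofReal_eq_one] at hV
      linarith
    rw [← triangleMap_image_stdTriangle A B C,
      integral_area_sq_image_triangleMap (abs_ne_zero.1 (hD ▸ two_ne_zero))
        isCompact_stdTriangle.isClosed.measurableSet,
      integral_area_sq_eq_det_momentMatrix isCompact_stdTriangle, momentMatrix_stdTriangle, hD]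
    simp only [det_fin_three, of_apply, cons_val', cons_val_zero, cons_val_fin_one,
      cons_val_one, cons_val]
    norm_num
  · show ∫ x₀ in unitSquare, ∫ x₁ in unitSquare, ∫ x₂ in unitSquare, _ = _
    rw [integral_area_sq_eq_det_momentMatrix isCompact_unitSquare, momentMatrix_unitSquare]
    simp only [det_fin_three, of_apply, cons_val', cons_val_zero, cons_val_fin_one,
      cons_val_one, cons_val]
    norm_num
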